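/- The determinant of the lower triangular matrix Y with entries Y_{jk} = [θ(aq^{2j-3})/θ(aq^{-1})] · (aq^{-1}, q^{1-k}, eq^{k-2})_{j-1} / (q, aq^{k-1}, aq^{2-k}/e)_{j-1} · q^{j-1} equals (e/a)^{binom(n,2)} ∏_{j=2}^n (a, eq^{j-2})_{j-1} / (aq^{j-2}, e/a)_{j-1}. -/

import Mathlib

/-!
`Y` is upper triangular: for `k < j` the factor `(q^{-k})_j` contains `θ(1) = 0`. So `det Y` is the
product of the diagonal entries, and each of them simplifies by three identities: peeling the first
factor off `(aq⁻¹)_j`, writing `(aq^{j-1})_{j+1}` with its first or its last factor split off, and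
the reflection formula `x^m q^{binom(m,2)} (q^{1-m}/x)_m = (-1)^m (x)_m`, a consequence of
`θ(1/x) = -θ(x)/x`. Applied to `x = q` and `x = e/a`, the reflection formula turns
`(q^{-m})_m / (aq^{1-m}/e)_m` into `(e/a)^m q^{-m} (q)_m / (e/a)_m`.
-/

open Finset

/-- The modified theta function θ(x) = ∏_{j≥0} (1 - pʲx)(1 - pʲ⁺¹/x). -/
noncomputable def theta (p x : ℂ) : ℂ :=
  ∏' j : ℕ, ((1 - p ^ j * x) * (1 - p ^ (j + 1) * x⁻¹))

/-- The elliptic shifted factorial (x)ₖ = θ(x)θ(xq)⋯θ(xq^{k-1}). -/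
noncomputable def ell (p q x : ℂ) (k : ℕ) : ℂ :=
  ∏ l ∈ Finset.range k, theta p (x * q ^ l)

section Theta

variable {p : ℂ}

lemma multipliable_one_sub_pow_mul (hp : ‖p‖ < 1) (c : ℂ) :
    Multipliable fun i : ℕ => 1 - p ^ i * c := by
  have hsum : Summable fun i : ℕ => -(p ^ i * c) :=
    ((summable_geometric_of_norm_lt_one hp).mul_right c).neg
  exact (Complex.multipliable_one_add_of_summable hsum).congr fun i => by ring

lemma multipliable_one_sub_pow_succ_mul (hp : ‖p‖ < 1) (c : ℂ) :
    Multipliable fun i : ℕ => 1 - p ^ (i + 1) * c :=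
  (multipliable_one_sub_pow_mul hp (p * c)).congr fun i => by ring

lemma theta_one (p : ℂ) : theta p 1 = 0 :=
  tprod_of_exists_eq_zero ⟨0, by simp⟩

lemma theta_eq_one_sub_mul (hp : ‖p‖ < 1) (z : ℂ) :
    theta p z =
      (1 - z) * ((∏' i : ℕ, (1 - p ^ (i + 1) * z)) * ∏' i : ℕ, (1 - p ^ (i + 1) * z⁻¹)) := by
  rw [theta, (multipliable_one_sub_pow_mul hp z).tprod_mul (multipliable_one_sub_pow_succ_mul hp z⁻¹),
    tprod_eq_zero_mul' (f := fun i : ℕ => 1 - p ^ i * z) (multipliable_one_sub_pow_succ_mul hp z)]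
  simp only [pow_zero, one_mul, mul_assoc]

lemma theta_inv (hp : ‖p‖ < 1) {z : ℂ} (hz : z ≠ 0) : theta p z⁻¹ = -z⁻¹ * theta p z := by
  rw [theta_eq_one_sub_mul hp, theta_eq_one_sub_mul hp, inv_inv,
    show 1 - z⁻¹ = -z⁻¹ * (1 - z) by field_simp; ring]
  ring

end Theta

section EllipticShiftedFactorial

variable {p q : ℂ}

lemma ell_succ (x : ℂ) (k : ℕ) : ell p q x (k + 1) = ell p q x k * theta p (x * q ^ k) :=
  prod_range_succ _ _

lemma ell_succ' (x : ℂ) (k : ℕ) : ell p q x (k + 1) = theta p x * ell p q (x * q) k := by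
  rw [ell, prod_range_succ', pow_zero, mul_one, mul_comm]
  exact congrArg _ (prod_congr rfl fun l _ => by ring_nf)

lemma ell_zpow_neg_eq_zero (hq : q ≠ 0) {j k : ℕ} (hkj : k < j) :
    ell p q (q ^ (-(k : ℤ))) j = 0 :=
  prod_eq_zero (mem_range.2 hkj) (by rw [← zpow_natCast, ← zpow_add₀ hq, neg_add_cancel,
    zpow_zero, theta_one])

lemma ell_reflect (hp : ‖p‖ < 1) (hq : q ≠ 0) {x : ℂ} (hx : x ≠ 0) (m : ℕ) :
    x ^ m * q ^ m.choose 2 * ell p q (x⁻¹ * q ^ (1 - (m : ℤ))) m = (-1) ^ m * ell p q x m := by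
  induction m with
  | zero => simp [ell]
  | succ m ih =>
    have hxq : x * q ^ m ≠ 0 := mul_ne_zero hx (pow_ne_zero _ hq)
    have harg : x⁻¹ * q ^ (1 - ((m + 1 : ℕ) : ℤ)) = (x * q ^ m)⁻¹ := by
      rw [mul_inv, ← zpow_natCast, ← zpow_neg]; push_cast; ring_nf
    have hshift : (x * q ^ m)⁻¹ * q = x⁻¹ * q ^ (1 - (m : ℤ)) := by
      rw [mul_inv, ← zpow_natCast, ← zpow_neg, mul_assoc, ← zpow_add_one₀ hq]; ring_nf
    rw [harg, ell_succ', hshift, theta_inv hp hxq, ell_succ, Nat.choose_succ_succ',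
      Nat.choose_one_right]
    calc _ = -((x * q ^ m) * (x * q ^ m)⁻¹) * theta p (x * q ^ m) *
          (x ^ m * q ^ m.choose 2 * ell p q (x⁻¹ * q ^ (1 - (m : ℤ))) m) := by ring
      _ = _ := by rw [mul_inv_cancel₀ hxq, ih]; ring

lemma ell_reflect_ratio (hp : ‖p‖ < 1) (hq : q ≠ 0) {x y : ℂ} (hx : x ≠ 0) (hy : y ≠ 0) (m : ℕ) :
    x ^ m * ell p q (x⁻¹ * q ^ (1 - (m : ℤ))) m * ell p q y m =
      y ^ m * ell p q (y⁻¹ * q ^ (1 - (m : ℤ))) m * ell p q x m := by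
  refine mul_right_cancel₀ (pow_ne_zero (m.choose 2) hq) ?_
  calc _ = (x ^ m * q ^ m.choose 2 * ell p q (x⁻¹ * q ^ (1 - (m : ℤ))) m) * ell p q y m := by ring
    _ = (y ^ m * q ^ m.choose 2 * ell p q (y⁻¹ * q ^ (1 - (m : ℤ))) m) * ell p q x m := by
      rw [ell_reflect hp hq hx, ell_reflect hp hq hy]; ring
    _ = _ := by ring

end EllipticShiftedFactorial

/-- The paper's `Y_{j+1,k+1}`: rows and columns are indexed from `0` here. -/
noncomputable def Y (p q a e : ℂ) (j k : ℕ) : ℂ :=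
  theta p (a * q ^ (2 * (j : ℤ) - 1)) / theta p (a * q⁻¹) *
    (ell p q (a * q⁻¹) j * ell p q (q ^ (-(k : ℤ))) j * ell p q (e * q ^ ((k : ℤ) - 1)) j) /
    (ell p q q j * ell p q (a * q ^ k) j * ell p q (a * q ^ (1 - (k : ℤ)) / e) j) * q ^ j

section Y

variable {p q a e : ℂ}

lemma Y_eq_zero_of_lt (hq : q ≠ 0) {j k : ℕ} (hkj : k < j) : Y p q a e j k = 0 := by
  rw [Y, ell_zpow_neg_eq_zero hq hkj]
  simp

lemma Y_zero_zero (hθ : theta p (a * q⁻¹) ≠ 0) : Y p q a e 0 0 = 1 := by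
  simp [Y, ell, hθ]

lemma Y_succ_succ (hp : ‖p‖ < 1) (hq : q ≠ 0) (ha : a ≠ 0) (he : e ≠ 0)
    (hθ : theta p (a * q⁻¹) ≠ 0) (t : ℕ)
    (hden : ell p q q (t + 1) * ell p q (a * q ^ (t + 1)) (t + 1) *
      ell p q (a * q ^ (1 - ((t + 1 : ℕ) : ℤ)) / e) (t + 1) ≠ 0)
    (hden' : ell p q (a * q ^ t) (t + 1) * ell p q (e / a) (t + 1) ≠ 0) :
    Y p q a e (t + 1) (t + 1) = (e / a) ^ (t + 1) *
      ((ell p q a (t + 1) * ell p q (e * q ^ t) (t + 1)) /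
        (ell p q (a * q ^ t) (t + 1) * ell p q (e / a) (t + 1))) := by
  have h2t : a * q ^ (2 * ((t + 1 : ℕ) : ℤ) - 1) = a * q ^ t * q ^ (t + 1) := by
    rw [mul_assoc, ← pow_add, ← zpow_natCast]; push_cast; ring_nf
  have hneg : q ^ (-((t + 1 : ℕ) : ℤ)) = q⁻¹ * q ^ (1 - ((t + 1 : ℕ) : ℤ)) := by
    rw [← zpow_neg_one, ← zpow_add₀ hq]; ring_nf
  have het : e * q ^ (((t + 1 : ℕ) : ℤ) - 1) = e * q ^ t := by
    rw [← zpow_natCast]; push_cast; ring_nf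
  have hae : a * q ^ (1 - ((t + 1 : ℕ) : ℤ)) / e = (e / a)⁻¹ * q ^ (1 - ((t + 1 : ℕ) : ℤ)) := by
    rw [inv_div]; ring
  have hshift : ell p q (a * q⁻¹) (t + 1) = theta p (a * q⁻¹) * ell p q a t := by
    rw [ell_succ', inv_mul_cancel_right₀ hq]
  have hpeel : theta p (a * q ^ t * q ^ (t + 1)) * ell p q (a * q ^ t) (t + 1) =
      theta p (a * q ^ t) * ell p q (a * q ^ (t + 1)) (t + 1) := by
    rw [mul_comm, ← ell_succ, ell_succ', mul_assoc, ← pow_succ]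
  have hreflect := ell_reflect_ratio (p := p) hp hq hq (div_ne_zero he ha) (t + 1)
  rw [Y, h2t, hneg, het, hae, hshift, ell_succ a t]
  rw [hae] at hden
  simp only [mul_ne_zero_iff] at hden hden'
  obtain ⟨⟨hQ, hE2⟩, hC⟩ := hden
  obtain ⟨hE4, hE5⟩ := hden'
  -- Naming these keeps `field_simp` away from the arguments of `theta` and `ell`.
  generalize theta p (a * q⁻¹) = θ₀ at hθ ⊢
  generalize theta p (a * q ^ t * q ^ (t + 1)) = θ₂ at hpeel ⊢
  generalize theta p (a * q ^ t) = θₜ at hpeel ⊢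
  generalize ell p q (q⁻¹ * q ^ (1 - ((t + 1 : ℕ) : ℤ))) (t + 1) = B at hreflect ⊢
  generalize ell p q ((e / a)⁻¹ * q ^ (1 - ((t + 1 : ℕ) : ℤ))) (t + 1) = C at hreflect hC ⊢
  generalize ell p q (a * q ^ (t + 1)) (t + 1) = E₂ at hpeel hE2 ⊢
  generalize ell p q (a * q ^ t) (t + 1) = E₄ at hpeel hE4 ⊢
  generalize ell p q (e * q ^ t) (t + 1) = E₆ at ⊢
  field_simp
  linear_combination (ell p q a t * E₆ * q ^ (t + 1) * B * ell p q (e / a) (t + 1)) * hpeel +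
    (θₜ * E₂ * ell p q a t * E₆) * hreflect

end Y

/-- The determinant of the triangular matrix Y. -/
theorem Y_determinant (p q a e : ℂ) (n : ℕ)
    (hp : ‖p‖ < 1) (hq : q ≠ 0) (ha : a ≠ 0) (he : e ≠ 0)
    (hθ : theta p (a * q⁻¹) ≠ 0)
    (hden : ∀ (j k : Fin n),
      ell p q q (j : ℕ) * ell p q (a * q ^ (k : ℕ)) (j : ℕ) *
        ell p q (a * q ^ (1 - (k : ℤ)) / e) (j : ℕ) ≠ 0)
    (hden' : ∀ j ∈ Finset.Icc 2 n,
      ell p q (a * q ^ (j - 2)) (j - 1) * ell p q (e / a) (j - 1) ≠ 0) :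
    Matrix.det (Matrix.of fun j k : Fin n =>
        theta p (a * q ^ (2 * (j : ℤ) - 1)) / theta p (a * q⁻¹) *
          (ell p q (a * q⁻¹) (j : ℕ) * ell p q (q ^ (-(k : ℤ))) (j : ℕ) *
            ell p q (e * q ^ ((k : ℤ) - 1)) (j : ℕ)) /
          (ell p q q (j : ℕ) * ell p q (a * q ^ (k : ℕ)) (j : ℕ) *
            ell p q (a * q ^ (1 - (k : ℤ)) / e) (j : ℕ)) *
          q ^ (j : ℕ)) =
      (e / a) ^ n.choose 2 *
        ∏ j ∈ Finset.Icc 2 n,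
          (ell p q a (j - 1) * ell p q (e * q ^ (j - 2)) (j - 1)) /
            (ell p q (a * q ^ (j - 2)) (j - 1) * ell p q (e / a) (j - 1)) := by
  change (Matrix.of fun j k : Fin n => Y p q a e j k).det = _
  have hupper : (Matrix.of fun j k : Fin n => Y p q a e j k).IsUpperTriangular :=
    fun j k hkj => Y_eq_zero_of_lt hq hkj
  rw [Matrix.det_of_isUpperTriangular hupper]
  simp only [Matrix.of_apply]
  rw [Fin.prod_univ_eq_prod_range (fun m => Y p q a e m m)]
  cases n with
  | zero => simp
  | succ N =>
    have hdiag : ∀ t ∈ range N, Y p q a e (t + 1) (t + 1) = (e / a) ^ (t + 1) *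
        ((ell p q a (t + 2 - 1) * ell p q (e * q ^ (t + 2 - 2)) (t + 2 - 1)) /
          (ell p q (a * q ^ (t + 2 - 2)) (t + 2 - 1) * ell p q (e / a) (t + 2 - 1))) := by
      intro t ht
      have htN : t + 1 < N + 1 := by simpa using ht
      exact Y_succ_succ hp hq ha he hθ t (hden ⟨t + 1, htN⟩ ⟨t + 1, htN⟩)
        (hden' (t + 2) (mem_Icc.2 ⟨by omega, by omega⟩))
    rw [prod_range_succ', Y_zero_zero hθ, mul_one, prod_congr rfl hdiag, prod_mul_distrib,
      prod_pow_eq_pow_sum, ← Ico_add_one_right_eq_Icc, prod_Ico_eq_prod_range,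
      show N + 1 + 1 - 2 = N by omega]
    congr 1
    · rw [Nat.choose_two_right, ← sum_range_id, sum_range_succ', add_zero]
    · exact prod_congr rfl fun t _ => by rw [add_comm 2 t]
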